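/- arXiv:1607.00377 — 2 statements merged into one kernel-verified Lean document; each statement's English description precedes it below -/
import Mathlib

section
/- Let m > 0. There exists a constant C > 0 such that for every r ≥ 0: ∫_r^∞ ( J₁(m√(s²−r²))² / √(s²−r²) ) ds ≤ C, where the integrand is extended continuously at s = r (the extension by 0 suffices since J₁(mw)²/w → 0 as w → 0⁺). -/
open Real Set Filter MeasureTheory intervalIntegral

/-- The Bessel function of the first kind of order one,
`J₁(x) = (1/π) ∫₀^π cos(θ − x sin θ) dθ`. -/
noncomputable def besselJ1 (x : ℝ) : ℝ :=
  (1 / π) * ∫ θ in (0:ℝ)..π, Real.cos (θ - x * Real.sin θ)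

/-!
With `w = √(s² − r²) ≥ s − r` the integrand is `J₁(m w)² / w`, so it suffices to bound
`J₁(x)² / x` by a multiple of `1 / (1 + x²)`: then the integrand is dominated by a multiple of
`m / (1 + m² (s − r)²)`, whose integral over `ℝ` is `π` for every `r`. Near `0` the bound
follows from `|J₁(x)| ≤ |x|`. For large `x` we use Bessel's equation: `u(t) = √t J₁(t)` solves
`u'' + (1 − 3/(4t²)) u = 0`, so the energy `(u² + u'²) exp(3/(4t))` is nonincreasing, which
gives `t J₁(t)² = O(1)`.
-/

noncomputable def besselJ1Deriv (x : ℝ) : ℝ :=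
  (1 / π) * ∫ θ in (0:ℝ)..π, sin (θ - x * sin θ) * sin θ

noncomputable def besselJ1Deriv2 (x : ℝ) : ℝ :=
  (1 / π) * ∫ θ in (0:ℝ)..π, -(cos (θ - x * sin θ) * sin θ ^ 2)

lemma hasDerivAt_integral_comp_sub_mul_sin {f f' g : ℝ → ℝ}
    (hf : ∀ y, HasDerivAt f (f' y) y) (hf'_cont : Continuous f') (hf'_le : ∀ y, |f' y| ≤ 1)
    (hg : Continuous g) (hg_le : ∀ θ, |g θ| ≤ 1) (x : ℝ) :
    HasDerivAt (fun y => ∫ θ in (0:ℝ)..π, f (θ - y * sin θ) * g θ)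
      (∫ θ in (0:ℝ)..π, -(f' (θ - x * sin θ) * sin θ * g θ)) x := by
  have hf_cont : Continuous f := continuous_iff_continuousAt.2 fun y => (hf y).continuousAt
  refine (hasDerivAt_integral_of_dominated_loc_of_deriv_le
    (F := fun y θ => f (θ - y * sin θ) * g θ)
    (F' := fun y θ => -(f' (θ - y * sin θ) * sin θ * g θ))
    (bound := fun _ => 1) univ_mem
    (Eventually.of_forall fun y => (by fun_prop : Continuous _).aestronglyMeasurable)
    ((by fun_prop : Continuous _).intervalIntegrable _ _)
    (by fun_prop : Continuous _).aestronglyMeasurable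
    (Eventually.of_forall fun θ _ y _ => ?_) intervalIntegrable_const
    (Eventually.of_forall fun θ _ y _ => ?_)).2
  · rw [norm_neg, norm_mul, norm_mul]
    exact mul_le_one₀ (mul_le_one₀ (hf'_le _) (norm_nonneg _) (abs_sin_le_one θ))
      (norm_nonneg _) (hg_le θ)
  · have hinner : HasDerivAt (fun y => θ - y * sin θ) (-sin θ) y := by
      simpa using ((hasDerivAt_id y).mul_const (sin θ)).const_sub θ
    exact (((hf _).comp y hinner).mul_const (g θ)).congr_deriv (by ring)

lemma hasDerivAt_besselJ1 (x : ℝ) : HasDerivAt besselJ1 (besselJ1Deriv x) x := by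
  have h := hasDerivAt_integral_comp_sub_mul_sin (g := fun _ => 1) hasDerivAt_cos
    continuous_sin.neg (fun y => by simpa using abs_sin_le_one y) continuous_const (by simp) x
  simp only [mul_one, neg_mul, neg_neg] at h
  exact h.const_mul (1 / π)

lemma hasDerivAt_besselJ1Deriv (x : ℝ) : HasDerivAt besselJ1Deriv (besselJ1Deriv2 x) x := by
  have h := hasDerivAt_integral_comp_sub_mul_sin hasDerivAt_sin continuous_cos abs_cos_le_one
    continuous_sin abs_sin_le_one x
  simp only [mul_assoc, ← sq] at h
  exact h.const_mul (1 / π)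

lemma hasDerivAt_sin_sub_mul_sin_mul_one_add_mul_cos (x θ : ℝ) :
    HasDerivAt (fun θ => -(sin (θ - x * sin θ) * (1 + x * cos θ)))
      (x ^ 2 * -(cos (θ - x * sin θ) * sin θ ^ 2) + x * (sin (θ - x * sin θ) * sin θ)
        + (x ^ 2 - 1) * cos (θ - x * sin θ)) θ := by
  have hinner : HasDerivAt (fun θ => θ - x * sin θ) (1 - x * cos θ) θ :=
    (hasDerivAt_id θ).sub ((hasDerivAt_sin θ).const_mul x)
  refine (((hasDerivAt_sin _).comp θ hinner).mul
    (((hasDerivAt_cos θ).const_mul x).const_add 1)).neg.congr_deriv ?_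
  simp only [Function.comp_apply, sin_sq]
  ring

-- The left side integrates an exact `θ`-derivative that vanishes at `0` and `π`.
theorem besselJ1_ode (x : ℝ) :
    x ^ 2 * besselJ1Deriv2 x + x * besselJ1Deriv x + (x ^ 2 - 1) * besselJ1 x = 0 := by
  have hint := integral_eq_sub_of_hasDerivAt
    (fun θ _ => hasDerivAt_sin_sub_mul_sin_mul_one_add_mul_cos x θ)
    ((by fun_prop : Continuous _).intervalIntegrable 0 π)
  simp only [sin_zero, sin_pi, mul_zero, sub_zero, zero_mul, neg_zero, sub_self] at hint
  have hii {F : ℝ → ℝ} (hF : Continuous F) : IntervalIntegrable F volume 0 π :=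
    hF.intervalIntegrable 0 π
  rw [intervalIntegral.integral_add (hii (by fun_prop)) (hii (by fun_prop)),
    intervalIntegral.integral_add (hii (by fun_prop)) (hii (by fun_prop)),
    intervalIntegral.integral_const_mul, intervalIntegral.integral_const_mul,
    intervalIntegral.integral_const_mul] at hint
  unfold besselJ1Deriv2 besselJ1Deriv besselJ1
  linear_combination (1 / π) * hint

theorem antitoneOn_sq_add_sq_mul_exp {u v : ℝ → ℝ} {c : ℝ} (hc : 0 ≤ c)
    (hu : ∀ t > 0, HasDerivAt u (v t) t)
    (hv : ∀ t > 0, HasDerivAt v (-u t + c / t ^ 2 * u t) t) :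
    AntitoneOn (fun t => (u t ^ 2 + v t ^ 2) * exp (c / t)) (Ioi 0) := by
  have hG : ∀ t > 0, HasDerivAt (fun t => (u t ^ 2 + v t ^ 2) * exp (c / t))
      (-(c / t ^ 2 * exp (c / t) * (u t - v t) ^ 2)) t := by
    intro t ht
    have hexp : HasDerivAt (fun t => exp (c / t)) (exp (c / t) * (c * -(t ^ 2)⁻¹)) t :=
      ((hasDerivAt_inv ht.ne').const_mul c).exp
    refine ((((hu t ht).pow 2).add ((hv t ht).pow 2)).mul hexp).congr_deriv ?_
    simp only [Pi.add_apply, Pi.pow_apply]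
    field_simp
    ring
  refine antitoneOn_of_deriv_nonpos (convex_Ioi 0)
    (fun t ht => (hG t ht).continuousAt.continuousWithinAt) ?_ ?_ <;> rw [interior_Ioi]
  · exact fun t ht => (hG t ht).differentiableAt.differentiableWithinAt
  · intro t ht
    rw [(hG t ht).deriv, neg_nonpos]
    positivity

lemma hasDerivAt_sqrt_mul_besselJ1 {t : ℝ} (ht : 0 < t) :
    HasDerivAt (fun t => √t * besselJ1 t) (√t * besselJ1Deriv t + besselJ1 t / (2 * √t)) t :=
  ((hasDerivAt_sqrt ht.ne').mul (hasDerivAt_besselJ1 t)).congr_deriv (by ring)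

lemma hasDerivAt_sqrt_mul_besselJ1Deriv_add {t : ℝ} (ht : 0 < t) :
    HasDerivAt (fun t => √t * besselJ1Deriv t + besselJ1 t / (2 * √t))
      (-(√t * besselJ1 t) + 3 / 4 / t ^ 2 * (√t * besselJ1 t)) t := by
  have hsqrt := hasDerivAt_sqrt ht.ne'
  have hs : 0 < √t := sqrt_pos.2 ht
  refine ((hsqrt.mul (hasDerivAt_besselJ1Deriv t)).add
    ((hasDerivAt_besselJ1 t).div (hsqrt.const_mul 2) (by positivity))).congr_deriv ?_
  have hode := besselJ1_ode t
  have hst : √t ^ 2 = t := sq_sqrt ht.le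
  field_simp
  rw [show √t ^ 4 = (√t ^ 2) ^ 2 by ring, hst]
  linear_combination 16 * t ^ 2 * hode

theorem exists_mul_besselJ1_sq_le : ∃ K, ∀ t, 1 ≤ t → t * besselJ1 t ^ 2 ≤ K := by
  set G := fun t =>
    ((√t * besselJ1 t) ^ 2 + (√t * besselJ1Deriv t + besselJ1 t / (2 * √t)) ^ 2) * exp (3 / 4 / t)
  have hG : AntitoneOn G (Ioi 0) := antitoneOn_sq_add_sq_mul_exp (by norm_num)
    (fun _ => hasDerivAt_sqrt_mul_besselJ1) (fun _ => hasDerivAt_sqrt_mul_besselJ1Deriv_add)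
  refine ⟨G 1, fun t ht => ?_⟩
  have ht0 : 0 < t := one_pos.trans_le ht
  calc t * besselJ1 t ^ 2 = (√t * besselJ1 t) ^ 2 := by rw [mul_pow, sq_sqrt ht0.le]
    _ ≤ G t := by
      have := one_le_exp (by positivity : 0 ≤ 3 / 4 / t)
      nlinarith [sq_nonneg (√t * besselJ1Deriv t + besselJ1 t / (2 * √t)),
        sq_nonneg (√t * besselJ1 t)]
    _ ≤ G 1 := hG (mem_Ioi.2 one_pos) (mem_Ioi.2 ht0) ht

lemma abs_besselJ1_le_abs (x : ℝ) : |besselJ1 x| ≤ |x| := by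
  have hshift : ∫ θ in (0:ℝ)..π, cos (θ - x * sin θ)
      = ∫ θ in (0:ℝ)..π, (cos (θ - x * sin θ) - cos θ) := by
    rw [intervalIntegral.integral_sub ((by fun_prop : Continuous _).intervalIntegrable _ _)
      (continuous_cos.intervalIntegrable _ _), integral_cos]
    simp
  have hle : ‖∫ θ in (0:ℝ)..π, (cos (θ - x * sin θ) - cos θ)‖ ≤ |x| * |π - 0| := by
    refine norm_integral_le_of_norm_le_const fun θ _ => (abs_cos_sub_cos_le _ _).trans ?_
    rw [sub_sub_cancel_left, abs_neg, abs_mul]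
    exact mul_le_of_le_one_right (abs_nonneg x) (abs_sin_le_one θ)
  rw [sub_zero, abs_of_pos pi_pos, Real.norm_eq_abs] at hle
  rw [besselJ1, hshift, abs_mul, abs_of_pos (by positivity : 0 < 1 / π)]
  calc 1 / π * |∫ θ in (0:ℝ)..π, (cos (θ - x * sin θ) - cos θ)|
      ≤ 1 / π * (|x| * π) := by gcongr
    _ = |x| := by field_simp

theorem exists_besselJ1_sq_div_le :
    ∃ K > 0, ∀ x > 0, besselJ1 x ^ 2 / x ≤ K / (1 + x ^ 2) := by
  obtain ⟨K, hK⟩ := exists_mul_besselJ1_sq_le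
  refine ⟨2 * max 1 K, by positivity, fun x hx => ?_⟩
  rw [div_le_div_iff₀ hx (by positivity)]
  rcases le_total x 1 with hx1 | hx1
  · have hJ : besselJ1 x ^ 2 ≤ x ^ 2 := sq_le_sq.2 (abs_besselJ1_le_abs x)
    calc besselJ1 x ^ 2 * (1 + x ^ 2) ≤ x ^ 2 * 2 := by gcongr; nlinarith
      _ ≤ 2 * max 1 K * x := by nlinarith [le_max_left 1 K]
  · calc besselJ1 x ^ 2 * (1 + x ^ 2) ≤ besselJ1 x ^ 2 * (2 * x ^ 2) := by gcongr; nlinarith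
      _ = 2 * x * (x * besselJ1 x ^ 2) := by ring
      _ ≤ 2 * x * max 1 K := by gcongr; exact (hK x hx1).trans (le_max_right 1 K)
      _ = 2 * max 1 K * x := by ring

lemma integrable_mul_inv_one_add_sq_mul_sub {m : ℝ} (hm : 0 < m) (r : ℝ) :
    Integrable fun s => m * (1 + (m * (s - r)) ^ 2)⁻¹ :=
  ((integrable_inv_one_add_sq.comp_mul_left' hm.ne').comp_sub_right r).const_mul m

lemma integral_mul_inv_one_add_sq_mul_sub {m : ℝ} (hm : 0 < m) (r : ℝ) :
    ∫ s, m * (1 + (m * (s - r)) ^ 2)⁻¹ = π := by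
  rw [MeasureTheory.integral_const_mul,
    integral_sub_right_eq_self (fun s => (1 + (m * s) ^ 2)⁻¹) r,
    Measure.integral_comp_mul_left (fun s => (1 + s ^ 2)⁻¹) m, integral_univ_inv_one_add_sq,
    abs_of_pos (inv_pos.2 hm), smul_eq_mul]
  field_simp

lemma sq_div_sqrt_sq_sub_sq_le {f : ℝ → ℝ} {K m r s : ℝ}
    (hf : ∀ x > 0, f x ^ 2 / x ≤ K / (1 + x ^ 2)) (hK : 0 ≤ K) (hm : 0 < m) (hr : 0 ≤ r)
    (hrs : r < s) :
    f (m * √(s ^ 2 - r ^ 2)) ^ 2 / √(s ^ 2 - r ^ 2)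
      ≤ K * (m * (1 + (m * (s - r)) ^ 2)⁻¹) := by
  set w := √(s ^ 2 - r ^ 2)
  have hw : 0 < w := sqrt_pos.2 (by nlinarith)
  have hsw : s - r ≤ w := le_sqrt_of_sq_le (by nlinarith)
  calc f (m * w) ^ 2 / w = m * (f (m * w) ^ 2 / (m * w)) := by field_simp
    _ ≤ m * (K / (1 + (m * w) ^ 2)) :=
      mul_le_mul_of_nonneg_left (hf _ (mul_pos hm hw)) hm.le
    _ ≤ m * (K / (1 + (m * (s - r)) ^ 2)) := by gcongr
    _ = K * (m * (1 + (m * (s - r)) ^ 2)⁻¹) := by ring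

/-- Let `m > 0`.  There is a constant `C > 0` such that for every
`r ≥ 0`: `∫_r^∞ J₁(m√(s²−r²))²/√(s²−r²) ds ≤ C` (the integrand, which is
nonnegative, is integrated over `(r,∞)`; its continuous extension at `s = r`
by `0` is immaterial). -/
theorem besselJ1_tail_uniform_bound
    (m : ℝ) (hm : 0 < m) :
    ∃ C > 0, ∀ r : ℝ, 0 ≤ r →
      ∫⁻ s in Ioi r, ENNReal.ofReal
          (besselJ1 (m * Real.sqrt (s ^ 2 - r ^ 2)) ^ 2 / Real.sqrt (s ^ 2 - r ^ 2))
        ≤ ENNReal.ofReal C := by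
  obtain ⟨K, hK, hJ⟩ := exists_besselJ1_sq_div_le
  refine ⟨K * π, by positivity, fun r hr => ?_⟩
  set g := fun s => K * (m * (1 + (m * (s - r)) ^ 2)⁻¹)
  calc _ ≤ ∫⁻ s in Ioi r, ENNReal.ofReal (g s) := setLIntegral_mono (by fun_prop) fun s hs =>
          ENNReal.ofReal_le_ofReal (sq_div_sqrt_sq_sub_sq_le hJ hK.le hm hr hs)
    _ ≤ ∫⁻ s, ENNReal.ofReal (g s) := setLIntegral_le_lintegral _ _
    _ = ENNReal.ofReal (K * π) := by
      rw [← ofReal_integral_eq_lintegral_ofReal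
        ((integrable_mul_inv_one_add_sq_mul_sub hm r).const_mul K)
        (Eventually.of_forall fun s => by positivity),
        MeasureTheory.integral_const_mul, integral_mul_inv_one_add_sq_mul_sub hm r]
end

section
/- Let m > 0. There exists a constant C = C(m) > 0 such that for all 0 ≤ τ ≤ t, all r ≥ 0, and all h ∈ L²([τ,t]; ℂ): | ∫_τ^t 𝟙{s ≤ t−r} ( J₁(m√((t−s)²−r²)) / √((t−s)²−r²) ) h(s) ds | ≤ C ( ∫_τ^t |h(s)|² ds )^{1/2}, where the kernel w ↦ J₁(mw)/w (with w = √((t−s)²−r²)) is extended continuously by the value m/2 at w = 0. -/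
/-!
From `|J₁(x)| ≤ min(1, |x|)` the kernel is bounded by `|m|`, and, using `w - r ≤ √(w² - r²)`
for `0 ≤ r ≤ w`, its square is dominated by the Lorentzian `2m² / (1 + m²(w - r)²)`, whose
integral over all of `ℝ` is `2πm` whatever `τ`, `t`, `r` are. Cauchy–Schwarz then gives the bound
with `C = √(2πm)`.
-/

open Real Set Filter MeasureTheory intervalIntegral

/-- The kernel `w ↦ J₁(m√(w²−r²))/√(w²−r²)`, extended continuously by the value
`m/2` at `w = r` (and below). -/
noncomputable def besselKernel (m r w : ℝ) : ℝ :=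
  if r < w then besselJ1 (m * Real.sqrt (w ^ 2 - r ^ 2)) / Real.sqrt (w ^ 2 - r ^ 2)
  else m / 2

lemma abs_inv_pi_mul_integral_le {f : ℝ → ℝ} {C : ℝ} (hf : ∀ θ, |f θ| ≤ C) :
    |(1 / π) * ∫ θ in (0:ℝ)..π, f θ| ≤ C := by
  have hint : ‖∫ θ in (0:ℝ)..π, f θ‖ ≤ C * |π - 0| :=
    norm_integral_le_of_norm_le_const fun θ _ => hf θ
  rw [sub_zero, abs_of_pos pi_pos] at hint
  rw [abs_mul, abs_of_pos (by positivity : (0:ℝ) < 1 / π)]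
  calc 1 / π * |∫ θ in (0:ℝ)..π, f θ| ≤ 1 / π * (C * π) := by gcongr; exact hint
    _ = C := by field_simp

lemma abs_besselJ1_sub_le (x y : ℝ) : |besselJ1 x - besselJ1 y| ≤ |x - y| := by
  have hcont : ∀ z : ℝ, IntervalIntegrable (fun θ => cos (θ - z * sin θ)) volume 0 π :=
    fun z => (by fun_prop : Continuous fun θ => cos (θ - z * sin θ)).intervalIntegrable _ _
  have hdiff : besselJ1 x - besselJ1 y
      = (1 / π) * ∫ θ in (0:ℝ)..π, (cos (θ - x * sin θ) - cos (θ - y * sin θ)) := by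
    rw [integral_sub (hcont x) (hcont y), besselJ1, besselJ1, mul_sub]
  rw [hdiff]
  refine abs_inv_pi_mul_integral_le fun θ => ?_
  calc |cos (θ - x * sin θ) - cos (θ - y * sin θ)|
      ≤ |(θ - x * sin θ) - (θ - y * sin θ)| := abs_cos_sub_cos_le _ _
    _ = |x - y| * |sin θ| := by rw [← abs_mul, ← abs_neg]; congr 1; ring
    _ ≤ |x - y| := mul_le_of_le_one_right (abs_nonneg _) (abs_sin_le_one θ)

lemma continuous_besselJ1 : Continuous besselJ1 :=
  LipschitzWith.continuous (K := 1) <| .of_dist_le_mul fun x y => by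
    simpa [Real.dist_eq] using abs_besselJ1_sub_le x y

lemma besselJ1_zero : besselJ1 0 = 0 := by
  simp [besselJ1, integral_cos]

lemma abs_besselJ1_le_one (x : ℝ) : |besselJ1 x| ≤ 1 :=
  abs_inv_pi_mul_integral_le fun _ => abs_cos_le_one _

lemma measurable_besselKernel (m r : ℝ) : Measurable (besselKernel m r) := by
  have hsqrt : Continuous fun w : ℝ => √(w ^ 2 - r ^ 2) := by fun_prop
  exact Measurable.ite (measurableSet_lt measurable_const measurable_id)
    ((continuous_besselJ1.comp (continuous_const.mul hsqrt)).measurable.div hsqrt.measurable)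
    measurable_const

lemma abs_besselKernel_le (m r w : ℝ) : |besselKernel m r w| ≤ |m| := by
  unfold besselKernel
  split_ifs
  · rcases (Real.sqrt_nonneg (w ^ 2 - r ^ 2)).eq_or_lt with hu | hu
    · rw [← hu, div_zero, abs_zero]; exact abs_nonneg m
    · rw [abs_div, abs_of_pos hu, div_le_iff₀ hu]
      calc |besselJ1 (m * √(w ^ 2 - r ^ 2))| ≤ |m * √(w ^ 2 - r ^ 2)| := abs_besselJ1_le_abs _
        _ = |m| * √(w ^ 2 - r ^ 2) := by rw [abs_mul, abs_of_pos hu]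
  · rw [abs_div, abs_two]; linarith [abs_nonneg m]

lemma sq_besselKernel_le (m : ℝ) {r w : ℝ} (hr : 0 ≤ r) (hrw : r ≤ w) :
    besselKernel m r w ^ 2 ≤ 2 * m ^ 2 / (1 + (m * (w - r)) ^ 2) := by
  unfold besselKernel
  rw [le_div_iff₀ (by positivity)]
  split_ifs with h
  · have hpos : 0 < w ^ 2 - r ^ 2 := by nlinarith
    set u := √(w ^ 2 - r ^ 2)
    have hu : 0 < u := Real.sqrt_pos.2 hpos
    have hu2 : u ^ 2 = w ^ 2 - r ^ 2 := Real.sq_sqrt hpos.le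
    have hwr : (w - r) ^ 2 ≤ u ^ 2 := by nlinarith
    set a := besselJ1 (m * u)
    have ha1 : a ^ 2 ≤ 1 := by
      simpa using sq_le_sq.2 ((abs_besselJ1_le_one (m * u)).trans (abs_one).ge)
    have ha2 : a ^ 2 ≤ (m * u) ^ 2 := sq_le_sq.2 (abs_besselJ1_le_abs (m * u))
    rw [div_pow, div_mul_eq_mul_div, div_le_iff₀ (by positivity)]
    nlinarith [mul_le_mul_of_nonneg_right ha1 (sq_nonneg (m * (w - r))),
      mul_le_mul_of_nonneg_left hwr (sq_nonneg m)]
  · rw [le_antisymm (not_lt.1 h) hrw, sub_self]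
    nlinarith [sq_nonneg m]

lemma integral_lorentzian_le {m : ℝ} (hm : 0 < m) (a b c : ℝ) :
    ∫ s in a..b, 2 * m ^ 2 / (1 + (m * (s - c)) ^ 2) ≤ 2 * π * m := by
  have harctan : arctan (m * (b - c)) - arctan (m * (a - c)) ≤ π := by
    linarith [arctan_lt_pi_div_two (m * (b - c)), neg_pi_div_two_lt_arctan (m * (a - c))]
  have hint : ∫ s in a..b, 2 * m ^ 2 / (1 + (m * (s - c)) ^ 2)
      = 2 * m * (arctan (m * (b - c)) - arctan (m * (a - c))) := by
    rw [integral_comp_sub_right (fun x => 2 * m ^ 2 / (1 + (m * x) ^ 2)),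
      integral_comp_mul_left (fun y => 2 * m ^ 2 / (1 + y ^ 2)) hm.ne']
    simp_rw [div_eq_mul_inv]
    rw [intervalIntegral.integral_const_mul, integral_inv_one_add_sq, smul_eq_mul]
    field_simp
  rw [hint]
  nlinarith

lemma norm_integral_mul_le_of_memLp {α 𝕜 : Type*} [MeasurableSpace α] [RCLike 𝕜] {μ : Measure α}
    {f g : α → 𝕜} (hf : MemLp f 2 μ) (hg : MemLp g 2 μ) :
    ‖∫ a, f a * g a ∂μ‖ ≤ (∫ a, ‖f a‖ ^ 2 ∂μ) ^ ((1:ℝ)/2) * (∫ a, ‖g a‖ ^ 2 ∂μ) ^ ((1:ℝ)/2) := by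
  have holder := integral_mul_norm_le_Lp_mul_Lq (f := f) (g := g) Real.HolderConjugate.two_two
    (by rwa [ENNReal.ofReal_ofNat]) (by rwa [ENNReal.ofReal_ofNat])
  simp only [Real.rpow_two] at holder
  calc ‖∫ a, f a * g a ∂μ‖ ≤ ∫ a, ‖f a * g a‖ ∂μ := norm_integral_le_integral_norm _
    _ = ∫ a, ‖f a‖ * ‖g a‖ ∂μ := by simp only [norm_mul]
    _ ≤ _ := holder

lemma norm_intervalIntegral_mul_le_of_memLp {𝕜 : Type*} [RCLike 𝕜] {f g : ℝ → 𝕜} {a b : ℝ}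
    (hab : a ≤ b) (hf : MemLp f 2 (volume.restrict (Icc a b)))
    (hg : MemLp g 2 (volume.restrict (Icc a b))) :
    ‖∫ s in a..b, f s * g s‖
      ≤ (∫ s in a..b, ‖f s‖ ^ 2) ^ ((1:ℝ)/2) * (∫ s in a..b, ‖g s‖ ^ 2) ^ ((1:ℝ)/2) := by
  simp only [integral_of_le hab, ← integral_Icc_eq_integral_Ioc]
  exact norm_integral_mul_le_of_memLp hf hg

section RetardedKernel

variable (m r t : ℝ)

lemma memLp_retardedBesselKernel (μ : Measure ℝ) [IsFiniteMeasure μ] :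
    MemLp (fun s => if s ≤ t - r then (besselKernel m r (t - s) : ℂ) else 0) 2 μ := by
  refine MemLp.of_bound ?_ |m| (Eventually.of_forall fun s => ?_)
  · exact (Measurable.ite (measurableSet_le measurable_id measurable_const)
      (Complex.measurable_ofReal.comp ((measurable_besselKernel m r).comp
        (measurable_const.sub measurable_id))) measurable_const).aestronglyMeasurable
  · split_ifs
    · simpa only [Complex.norm_real, Real.norm_eq_abs] using abs_besselKernel_le m r (t - s)
    · simp

lemma norm_sq_retardedBesselKernel_le (hr : 0 ≤ r) (s : ℝ) :
    ‖if s ≤ t - r then (besselKernel m r (t - s) : ℂ) else 0‖ ^ 2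
      ≤ 2 * m ^ 2 / (1 + (m * (s - (t - r))) ^ 2) := by
  split_ifs with hs
  · rw [Complex.norm_real, Real.norm_eq_abs, sq_abs,
      show s - (t - r) = -(t - s - r) by ring, mul_neg, neg_sq]
    exact sq_besselKernel_le m hr (by linarith)
  · rw [norm_zero, sq, zero_mul]; positivity

lemma integral_norm_sq_retardedBesselKernel_le (hm : 0 < m) (hr : 0 ≤ r) {a b : ℝ} (hab : a ≤ b) :
    ∫ s in a..b, ‖if s ≤ t - r then (besselKernel m r (t - s) : ℂ) else 0‖ ^ 2 ≤ 2 * π * m := by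
  have hlorentz :
      IntervalIntegrable (fun s => 2 * m ^ 2 / (1 + (m * (s - (t - r))) ^ 2)) volume a b :=
    (continuous_const.div (by fun_prop) fun s => by positivity).intervalIntegrable _ _
  have hkernel := (intervalIntegrable_iff_integrableOn_Ioc_of_le hab).2
    ((memLp_retardedBesselKernel m r t (volume.restrict (Ioc a b))).integrable_norm_pow two_ne_zero)
  refine (integral_mono hab hkernel hlorentz (norm_sq_retardedBesselKernel_le m r t hr)).trans ?_
  exact integral_lorentzian_le hm a b (t - r)

end RetardedKernel

/-- Let `m > 0`.  There is `C = C(m) > 0` such that for all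
`0 ≤ τ ≤ t`, all `r ≥ 0` and all `h ∈ L²([τ,t];ℂ)`:
`|∫_τ^t 𝟙{s ≤ t−r} (J₁(m√((t−s)²−r²))/√((t−s)²−r²)) h(s) ds|
  ≤ C (∫_τ^t |h(s)|² ds)^{1/2}`,
the kernel being extended continuously by `m/2` at `√((t−s)²−r²) = 0`. -/
theorem bessel_tail_pointwise_bound
    (m : ℝ) (hm : 0 < m) :
    ∃ C > 0, ∀ τ t r : ℝ, 0 ≤ τ → τ ≤ t → 0 ≤ r → ∀ h : ℝ → ℂ,
      MemLp h 2 ((volume : Measure ℝ).restrict (Icc τ t)) →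
      ‖∫ s in τ..t, (if s ≤ t - r then (besselKernel m r (t - s) : ℂ) else 0) * h s‖
        ≤ C * (∫ s in τ..t, ‖h s‖ ^ 2) ^ ((1:ℝ)/2) := by
  refine ⟨√(2 * π * m), by positivity, fun τ t r _ hτt hr h hh => ?_⟩
  refine (norm_intervalIntegral_mul_le_of_memLp hτt
    (memLp_retardedBesselKernel m r t _) hh).trans ?_
  rw [sqrt_eq_rpow]
  gcongr
  · exact rpow_nonneg (intervalIntegral.integral_nonneg hτt fun s _ => by positivity) _
  · exact intervalIntegral.integral_nonneg hτt fun s _ => by positivity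
  · exact integral_norm_sq_retardedBesselKernel_le m r t hm hr hτt
end
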